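/- (Corollary 1.5(2), twisted case; eq. (1.39), equivalently (1.45).) Let l be a natural number. In the formal power series ring ℚ[[x₁, …, x₄, y₁, …, y_l, u]], the homogeneous component of total degree 4 of exp((1/24)·(Σ_{j=1}^{4} xⱼ² - Σ_{k=1}^{l} yₖ²)) · [ Π_{j=1}^{4} A(xⱼ) · Π_{k=1}^{l} 2cosh(yₖ/2) · cosh(u/2)^{-2} - Π_{j=1}^{4} A(xⱼ) · cosh(u/2) · ( -2^{l-4}·Σ_{k=1}^{l}(e^{yₖ} + e^{-yₖ}) + 2^{l-3}·(l+8) + 3·2^{l-4}·(e^{u} + e^{-u} - 2) ) ] equals 0. (This is the Chern-root form of the twisted 8-dimensional generalized anomaly cancellation formula (1.45), with no condition on first Pontryagin forms.) -/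

import Mathlib

open MvPowerSeries

/-- Formal exponential of a multivariate power series (with zero constant term):
the coefficient of a monomial `m` in `exp S` is `Σ_k coeff m (S^k) / k!`. -/
noncomputable def mexp {σ : Type*} (S : MvPowerSeries σ ℚ) : MvPowerSeries σ ℚ :=
  fun m => ∑ k ∈ Finset.range ((m.sum fun _ e => e) + 1),
    ((k.factorial : ℚ))⁻¹ * MvPowerSeries.coeff (R := ℚ) m (S ^ k)

/-- Formal hyperbolic cosine: `cosh S = (exp S + exp (-S)) / 2`. -/
noncomputable def mcosh {σ : Type*} (S : MvPowerSeries σ ℚ) : MvPowerSeries σ ℚ :=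
  (2 : ℚ)⁻¹ • (mexp S + mexp (-S))

/-!
Every factor depends on a single Chern root, so each of `mexp`, `mcosh` and the inverse of `cosh`
becomes a substitution `f(X v)` of a one-variable series, and the whole series is a linear
combination of products `∏ v, f_v(X v)`, whose coefficients are products of one-variable
coefficients. Since `e^{x²/24} Â(x) = 1 + x⁴/2880 + O(x⁵)`, the degree-4 coefficient vanishes
unless the `x`-exponents have total degree `0` or `4`; it is then a multiple of a rational
expression in the `y`- and `u`-exponents of total degree `4` or `0`. All series involved are
even, so this expression only has to be evaluated on the exponent patterns `0`, `2`, `4`,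
`2 + 2`, using the Taylor coefficients up to degree `4`.
-/

section OfVar

variable {R σ : Type*} [CommRing R]

noncomputable abbrev ofVar (i : σ) : PowerSeries R →ₐ[R] MvPowerSeries σ R :=
  PowerSeries.substAlgHom (PowerSeries.HasSubst.X i)

lemma ofVar_apply (i : σ) (f : PowerSeries R) : ofVar i f = f.subst (X i) := by
  rw [PowerSeries.coe_substAlgHom]

lemma coeff_ofVar [DecidableEq σ] (i : σ) (f : PowerSeries R) (m : σ →₀ ℕ) :
    coeff m (ofVar i f) =
      if m = Finsupp.single i (m i) then PowerSeries.coeff (m i) f else 0 := by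
  rw [ofVar_apply, PowerSeries.coeff_subst_single]

lemma constantCoeff_ofVar (i : σ) (f : PowerSeries R) :
    constantCoeff (ofVar i f) = PowerSeries.constantCoeff f := by
  classical
  rw [← coeff_zero_eq_constantCoeff_apply, coeff_ofVar]
  simp

lemma coeff_prod_ofVar [DecidableEq σ] [Fintype σ] (F : σ → PowerSeries R) (m : σ →₀ ℕ) :
    coeff m (∏ i, ofVar i (F i)) = ∏ i, PowerSeries.coeff (m i) (F i) := by
  rw [coeff_prod,
    Finset.sum_eq_single (Finsupp.equivFunOnFinite.symm fun i => Finsupp.single i (m i))]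
  · simp [coeff_ofVar]
  · intro p hp hne
    rw [Finset.mem_finsuppAntidiag] at hp
    by_contra hprod
    have hsingle : ∀ i, p i = Finsupp.single i (p i i) := fun i => by
      by_contra h
      exact hprod (Finset.prod_eq_zero (Finset.mem_univ i) (by rw [coeff_ofVar, if_neg h]))
    refine hne (Finsupp.ext fun i => ?_)
    rw [hsingle i, Finsupp.equivFunOnFinite_symm_apply_apply, ← hp.1, Finset.sum_apply',
      Finset.sum_eq_single i (fun j _ hji => by rw [hsingle j, Finsupp.single_eq_of_ne hji.symm])
        (by simp)]
  · intro h
    exact absurd (Finset.mem_finsuppAntidiag.mpr ⟨by simp [Finsupp.univ_sum_single], by simp⟩) h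

lemma ofVar_inv {k : Type*} [Field k] (i : σ) {f : PowerSeries k}
    (hf : PowerSeries.constantCoeff f ≠ 0) : (ofVar i f)⁻¹ = ofVar i f⁻¹ := by
  rw [MvPowerSeries.inv_eq_iff_mul_eq_one (by rwa [constantCoeff_ofVar]), ← map_mul,
    PowerSeries.inv_mul_cancel f hf, map_one]

end OfVar

namespace Polynomial

noncomputable def evenQuartic (a b c : ℚ) : ℚ[X] := C a + C b * X ^ 2 + C c * X ^ 4

@[simp]
lemma coeff_evenQuartic (a b c : ℚ) (n : ℕ) :
    (evenQuartic a b c).coeff n =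
      if n = 0 then a else if n = 2 then b else if n = 4 then c else 0 := by
  simp only [evenQuartic, coeff_add, coeff_C, coeff_C_mul, coeff_X_pow]
  split_ifs <;> simp_all

end Polynomial

namespace PowerSeries

open Polynomial (evenQuartic coeff_evenQuartic)

noncomputable def expSq (c : ℚ) : PowerSeries ℚ := expand 2 two_ne_zero (rescale c (exp ℚ))

noncomputable def twoCosh (c : ℚ) : PowerSeries ℚ := rescale c (exp ℚ) + rescale (-c) (exp ℚ)

noncomputable def coshHalf : PowerSeries ℚ := (2 : ℚ)⁻¹ • twoCosh 2⁻¹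

noncomputable def twoSinhHalfDivX : PowerSeries ℚ :=
  mk fun n => coeff (n + 1) (rescale 2⁻¹ (exp ℚ) - rescale (-2⁻¹) (exp ℚ))

noncomputable def ahat : PowerSeries ℚ := twoSinhHalfDivX⁻¹

lemma coeff_rescale_exp (c : ℚ) (n : ℕ) :
    coeff n (rescale c (exp ℚ)) = c ^ n / n.factorial := by
  simp [coeff_rescale, coeff_exp, div_eq_mul_inv]

lemma X_mul_twoSinhHalfDivX :
    X * twoSinhHalfDivX = rescale 2⁻¹ (exp ℚ) - rescale (-2⁻¹) (exp ℚ) := by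
  conv_rhs => rw [eq_X_mul_shift_add_const (rescale 2⁻¹ (exp ℚ) - rescale (-2⁻¹) (exp ℚ))]
  rw [← coeff_zero_eq_constantCoeff_apply, map_sub, coeff_rescale_exp, coeff_rescale_exp]
  simp [twoSinhHalfDivX]

lemma coeff_mul_eq_sum_range {R : Type*} [Semiring R] (f g : PowerSeries R) (n : ℕ) :
    coeff n (f * g) = ∑ i ∈ Finset.range (n + 1), coeff i f * coeff (n - i) g := by
  rw [coeff_mul, Finset.Nat.sum_antidiagonal_eq_sum_range_succ_mk]

lemma coeff_eq_of_trunc_eq {R : Type*} [Semiring R] {f : PowerSeries R} {p : Polynomial R}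
    {N : ℕ} (h : trunc N f = p) (n : ℕ) (hn : n < N) : coeff n f = p.coeff n := by
  rw [← h, coeff_trunc, if_pos hn]

lemma trunc_five_eq_evenQuartic {f : PowerSeries ℚ} {a b c : ℚ} (h₀ : coeff 0 f = a)
    (h₁ : coeff 1 f = 0) (h₂ : coeff 2 f = b) (h₃ : coeff 3 f = 0) (h₄ : coeff 4 f = c) :
    trunc 5 f = evenQuartic a b c := by
  ext n
  rw [coeff_trunc, coeff_evenQuartic]
  by_cases hn : n < 5
  · rw [if_pos hn]
    interval_cases n <;> simp [*]
  · rw [if_neg hn]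
    split_ifs <;> first | rfl | omega

lemma trunc_five_coe_evenQuartic (a b c : ℚ) :
    trunc 5 (evenQuartic a b c : PowerSeries ℚ) = evenQuartic a b c := by
  apply trunc_five_eq_evenQuartic <;> simp

lemma trunc_five_mul {f g : PowerSeries ℚ} {a b c a' b' c' : ℚ}
    (hf : trunc 5 f = evenQuartic a b c) (hg : trunc 5 g = evenQuartic a' b' c') :
    trunc 5 (f * g) =
      evenQuartic (a * a') (a * b' + b * a') (a * c' + b * b' + c * a') := by
  apply trunc_five_eq_evenQuartic <;>
    simp [coeff_mul_eq_sum_range, Finset.sum_range_succ, coeff_eq_of_trunc_eq hf,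
      coeff_eq_of_trunc_eq hg]

lemma trunc_inv_eq_of_trunc_mul_eq_one {k : Type*} [Field k] {φ ψ : PowerSeries k} {n : ℕ}
    (hφ : constantCoeff φ ≠ 0) (h : trunc n (φ * ψ) = 1) : trunc n φ⁻¹ = trunc n ψ := by
  rw [← one_mul ψ, ← PowerSeries.inv_mul_cancel φ hφ, mul_assoc, ← trunc_mul_trunc, h,
    Polynomial.coe_one, mul_one]

lemma trunc_expSq (c : ℚ) : trunc 5 (expSq c) = evenQuartic 1 c (c ^ 2 / 2) := by
  apply trunc_five_eq_evenQuartic <;> simp [expSq, coeff_expand, div_eq_mul_inv]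

lemma trunc_coshHalf : trunc 5 coshHalf = evenQuartic 1 (1 / 8) (1 / 384) := by
  apply trunc_five_eq_evenQuartic <;>
    simp only [coshHalf, twoCosh, map_smul, map_add, coeff_rescale_exp, smul_eq_mul] <;>
    norm_num [Nat.factorial]

lemma trunc_twoSinhHalfDivX : trunc 5 twoSinhHalfDivX = evenQuartic 1 (1 / 24) (1 / 1920) := by
  apply trunc_five_eq_evenQuartic <;>
    simp only [twoSinhHalfDivX, coeff_mk, map_sub, coeff_rescale_exp] <;>
    norm_num [Nat.factorial]

lemma trunc_twoCosh_one_sub_two : trunc 5 (twoCosh 1 - 2) = evenQuartic 0 1 (1 / 12) := by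
  rw [← map_ofNat C 2]
  apply trunc_five_eq_evenQuartic <;>
    simp only [twoCosh, map_sub, map_add, coeff_rescale_exp, coeff_C] <;>
    norm_num [Nat.factorial]

lemma constantCoeff_twoSinhHalfDivX : constantCoeff twoSinhHalfDivX = 1 := by
  simpa using coeff_eq_of_trunc_eq trunc_twoSinhHalfDivX 0 (by norm_num)

lemma constantCoeff_coshHalf : constantCoeff coshHalf = 1 := by
  simpa using coeff_eq_of_trunc_eq trunc_coshHalf 0 (by norm_num)

lemma trunc_ahat : trunc 5 ahat = evenQuartic 1 (-1 / 24) (7 / 5760) := by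
  rw [ahat, trunc_inv_eq_of_trunc_mul_eq_one (ψ := evenQuartic 1 (-1 / 24) (7 / 5760))
      (by simp [constantCoeff_twoSinhHalfDivX]),
    trunc_five_coe_evenQuartic]
  rw [trunc_five_mul trunc_twoSinhHalfDivX (trunc_five_coe_evenQuartic _ _ _)]
  norm_num [evenQuartic]

lemma trunc_inv_coshHalf : trunc 5 coshHalf⁻¹ = evenQuartic 1 (-1 / 8) (5 / 384) := by
  rw [trunc_inv_eq_of_trunc_mul_eq_one (ψ := evenQuartic 1 (-1 / 8) (5 / 384))
      (by simp [constantCoeff_coshHalf]), trunc_five_coe_evenQuartic]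
  rw [trunc_five_mul trunc_coshHalf (trunc_five_coe_evenQuartic _ _ _)]
  norm_num [evenQuartic]

lemma trunc_expSq_mul_ahat : trunc 5 (expSq 24⁻¹ * ahat) = evenQuartic 1 0 (1 / 2880) := by
  rw [trunc_five_mul (trunc_expSq _) trunc_ahat]
  norm_num

lemma trunc_expSq_mul_coshHalf :
    trunc 5 (expSq (-24⁻¹) * coshHalf) = evenQuartic 1 (1 / 12) (-1 / 576) := by
  rw [trunc_five_mul (trunc_expSq _) trunc_coshHalf]
  norm_num

lemma trunc_expSq_mul_twoCosh_one_sub_two :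
    trunc 5 (expSq (-24⁻¹) * (twoCosh 1 - 2)) = evenQuartic 0 1 (1 / 24) := by
  rw [trunc_five_mul (trunc_expSq _) trunc_twoCosh_one_sub_two]
  norm_num

lemma trunc_inv_coshHalf_sq : trunc 5 (coshHalf⁻¹ ^ 2) = evenQuartic 1 (-1 / 4) (1 / 24) := by
  rw [sq, trunc_five_mul trunc_inv_coshHalf trunc_inv_coshHalf]
  norm_num

lemma trunc_coshHalf_mul_twoCosh_one_sub_two :
    trunc 5 (coshHalf * (twoCosh 1 - 2)) = evenQuartic 0 1 (5 / 24) := by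
  rw [trunc_five_mul trunc_coshHalf trunc_twoCosh_one_sub_two]
  norm_num

end PowerSeries

section Mexp

open PowerSeries (ahat coshHalf twoCosh twoSinhHalfDivX)

variable {σ : Type*}

lemma coeff_mexp (S : MvPowerSeries σ ℚ) (m : σ →₀ ℕ) :
    coeff m (mexp S) =
      ∑ k ∈ Finset.range (m.degree + 1), (k.factorial : ℚ)⁻¹ * coeff m (S ^ k) :=
  rfl

lemma coeff_pow_eq_zero_of_degree_lt {R : Type*} [CommSemiring R] {S : MvPowerSeries σ R}
    (hS : constantCoeff S = 0) {m : σ →₀ ℕ} {k : ℕ} (h : m.degree < k) : coeff m (S ^ k) = 0 :=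
  coeff_of_lt_order ((Nat.cast_lt.mpr h).trans_le
    ((le_order_pow_of_constantCoeff_eq_zero k hS).trans' (by simp)))

lemma mexp_eq_subst_exp {S : MvPowerSeries σ ℚ} (hS : constantCoeff S = 0) :
    mexp S = (PowerSeries.exp ℚ).subst S := by
  ext m
  rw [PowerSeries.coeff_subst (PowerSeries.HasSubst.of_constantCoeff_zero hS),
    finsum_eq_sum_of_support_subset (s := Finset.range (m.degree + 1)), coeff_mexp]
  · simp [PowerSeries.coeff_exp]
  · intro k hk
    by_contra h
    simp only [Finset.coe_range, Set.mem_Iio, not_lt] at h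
    exact hk (by simp only [coeff_pow_eq_zero_of_degree_lt hS (by omega : m.degree < k), smul_zero])

lemma exp_subst_X_zero_add_X_one :
    (PowerSeries.exp ℚ).subst (X 0 + X 1 : MvPowerSeries (Fin 2) ℚ) =
      (PowerSeries.exp ℚ).subst (X 0) * (PowerSeries.exp ℚ).subst (X 1) := by
  ext e
  rw [PowerSeries.coeff_subst_X_zero_add_X_one, PowerSeries.coeff_subst_X_zero_subst_mul_X_one]
  simp only [PowerSeries.coeff_exp, one_div, Algebra.algebraMap_self, RingHom.id_apply]
  rw [Nat.cast_add_choose]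
  field_simp

/-- Substitute `![S, T]` into `exp (X 0 + X 1) = exp (X 0) * exp (X 1)`. -/
lemma mexp_add {S T : MvPowerSeries σ ℚ} (hS : constantCoeff S = 0) (hT : constantCoeff T = 0) :
    mexp (S + T) = mexp S * mexp T := by
  have hST : HasSubst ![S, T] :=
    hasSubst_of_constantCoeff_zero (by simp [Fin.forall_fin_two, hS, hT])
  have hX (i : Fin 2) : PowerSeries.HasSubst (X i : MvPowerSeries (Fin 2) ℚ) :=
    PowerSeries.HasSubst.X i
  have hX₀₁ : PowerSeries.HasSubst (X 0 + X 1 : MvPowerSeries (Fin 2) ℚ) :=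
    PowerSeries.HasSubst.of_constantCoeff_zero (by simp)
  have key := congrArg (subst ![S, T]) exp_subst_X_zero_add_X_one
  rw [subst_mul hST, PowerSeries.subst_def, PowerSeries.subst_def, PowerSeries.subst_def,
    subst_comp_subst_apply hX₀₁.const hST, subst_comp_subst_apply (hX 0).const hST,
    subst_comp_subst_apply (hX 1).const hST] at key
  simp only [subst_add hST, subst_X hST] at key
  rw [mexp_eq_subst_exp (by simp [hS, hT]), mexp_eq_subst_exp hS, mexp_eq_subst_exp hT]
  exact key

lemma mexp_zero : mexp (0 : MvPowerSeries σ ℚ) = 1 := by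
  rw [mexp_eq_subst_exp (map_zero _), PowerSeries.subst_zero_eq_C_constantCoeff]
  simp

lemma mexp_sum {ι : Type*} (s : Finset ι) (S : ι → MvPowerSeries σ ℚ)
    (hS : ∀ i ∈ s, constantCoeff (S i) = 0) : mexp (∑ i ∈ s, S i) = ∏ i ∈ s, mexp (S i) := by
  classical
  induction s using Finset.induction with
  | empty => exact mexp_zero
  | insert i s hi ih =>
    rw [Finset.forall_mem_insert] at hS
    rw [Finset.sum_insert hi, Finset.prod_insert hi,
      mexp_add hS.1 (by rw [map_sum]; exact Finset.sum_eq_zero hS.2), ih hS.2]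

lemma mexp_ofVar (i : σ) {f : PowerSeries ℚ} (hf : PowerSeries.constantCoeff f = 0) :
    mexp (ofVar i f) = ofVar i ((PowerSeries.exp ℚ).subst f) := by
  rw [mexp_eq_subst_exp (by rw [constantCoeff_ofVar, hf]), ofVar_apply, ofVar_apply,
    PowerSeries.subst_comp_subst_apply (PowerSeries.HasSubst.of_constantCoeff_zero' hf)
      (PowerSeries.HasSubst.X i)]

lemma mexp_smul_X_pow (c : ℚ) (i : σ) {d : ℕ} (hd : d ≠ 0) :
    mexp (c • X i ^ d) =
      ofVar i (PowerSeries.expand d hd (PowerSeries.rescale c (PowerSeries.exp ℚ))) := by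
  have hXd := PowerSeries.HasSubst.X_pow (R := ℚ) hd
  have h : c • X i ^ d = ofVar i (c • PowerSeries.X ^ d : PowerSeries ℚ) := by
    simp [PowerSeries.substAlgHom_X]
  rw [h, mexp_ofVar i (by simp [hd]), PowerSeries.expand_apply, PowerSeries.rescale_eq_subst,
    PowerSeries.subst_comp_subst_apply (PowerSeries.HasSubst.smul_X' c) hXd,
    PowerSeries.subst_smul hXd, PowerSeries.subst_X hXd]

lemma mexp_smul_X (c : ℚ) (i : σ) :
    mexp (c • X i) = ofVar i (PowerSeries.rescale c (PowerSeries.exp ℚ)) := by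
  simpa using mexp_smul_X_pow c i one_ne_zero

lemma mexp_add_mexp_neg (c : ℚ) (i : σ) :
    mexp (c • X i) + mexp (-(c • X i)) = ofVar i (twoCosh c) := by
  rw [← neg_smul, mexp_smul_X, mexp_smul_X, twoCosh, map_add]

lemma mcosh_smul_X_half (i : σ) : mcosh ((2 : ℚ)⁻¹ • X i) = ofVar i coshHalf := by
  rw [mcosh, mexp_add_mexp_neg, coshHalf, map_smul]

lemma eq_ofVar_ahat {A : MvPowerSeries σ ℚ} {i : σ}
    (hA : A * (mexp ((2 : ℚ)⁻¹ • X i) - mexp (-((2 : ℚ)⁻¹ • X i))) = X i) :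
    A = ofVar i ahat := by
  have hsinh : mexp ((2 : ℚ)⁻¹ • X i) - mexp (-((2 : ℚ)⁻¹ • X i)) =
      X i * ofVar i twoSinhHalfDivX := by
    rw [← neg_smul, mexp_smul_X, mexp_smul_X, ← map_sub, ← PowerSeries.X_mul_twoSinhHalfDivX,
      map_mul, ofVar, PowerSeries.substAlgHom_X]
  have hinv : A * ofVar i twoSinhHalfDivX = 1 := by
    refine mul_right_cancel₀ (nonZeroDivisors.ne_zero X_mem_nonzeroDivisors :
      (X i : MvPowerSeries σ ℚ) ≠ 0) ?_
    rw [one_mul]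
    conv_rhs => rw [← hA, hsinh]
    ring
  calc A = A * (ofVar i twoSinhHalfDivX * ofVar i ahat) := by
        rw [← map_mul, PowerSeries.ahat, PowerSeries.mul_inv_cancel _
          (by simp [PowerSeries.constantCoeff_twoSinhHalfDivX]), map_one, mul_one]
    _ = ofVar i ahat := by rw [← mul_assoc, hinv, one_mul]

end Mexp

section RootPatterns

open PowerSeries (coshHalf twoCosh)

variable {ι R : Type*} [Fintype ι] [CommSemiring R] {q : ι → ℕ} {i j : ι}

lemma prod_coeff_eq_of_forall_ne {F : PowerSeries R} (hF : PowerSeries.coeff 0 F = 1)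
    (hq : ∀ k, k ≠ i → q k = 0) : ∏ k, PowerSeries.coeff (q k) F = PowerSeries.coeff (q i) F :=
  Finset.prod_eq_single i (fun k _ hk => by rw [hq k hk, hF]) (by simp)

lemma prod_coeff_eq_of_forall_ne_ne {F : PowerSeries R} (hF : PowerSeries.coeff 0 F = 1)
    (hij : i ≠ j) (hq : ∀ k, k ≠ i → k ≠ j → q k = 0) :
    ∏ k, PowerSeries.coeff (q k) F = PowerSeries.coeff (q i) F * PowerSeries.coeff (q j) F :=
  Finset.prod_eq_mul i j hij (fun k _ hk => by rw [hq k hk.1 hk.2, hF]) (by simp) (by simp)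

lemma prod_coeff_mul_twoCosh_half (F : PowerSeries ℚ) (q : ι → ℕ) :
    ∏ k, PowerSeries.coeff (q k) (F * twoCosh 2⁻¹) =
      2 ^ Fintype.card ι * ∏ k, PowerSeries.coeff (q k) (F * coshHalf) := by
  have h : twoCosh 2⁻¹ = (2 : ℚ) • coshHalf := by simp [coshHalf, smul_smul]
  simp [h, Finset.prod_mul_distrib]

variable [DecidableEq ι]

lemma sum_coeff_mul_prod_erase_eq_zero {F G : PowerSeries R} (hF : PowerSeries.coeff (q i) F = 0)
    (hG : PowerSeries.coeff (q i) G = 0) :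
    ∑ k, PowerSeries.coeff (q k) F * ∏ k' ∈ Finset.univ.erase k, PowerSeries.coeff (q k') G = 0 :=
  Finset.sum_eq_zero fun k _ => by
    rcases eq_or_ne k i with rfl | hki
    · rw [hF, zero_mul]
    · rw [Finset.prod_eq_zero (Finset.mem_erase.mpr ⟨hki.symm, Finset.mem_univ i⟩) hG, mul_zero]

lemma sum_coeff_mul_prod_erase_eq_of_forall_ne {F G : PowerSeries R}
    (hF : PowerSeries.coeff 0 F = 0) (hG : PowerSeries.coeff 0 G = 1) (hq : ∀ k, k ≠ i → q k = 0) :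
    ∑ k, PowerSeries.coeff (q k) F * ∏ k' ∈ Finset.univ.erase k, PowerSeries.coeff (q k') G =
      PowerSeries.coeff (q i) F := by
  rw [Finset.sum_eq_single i (fun k _ hk => by rw [hq k hk, hF, zero_mul]) (by simp),
    Finset.prod_eq_one (fun k hk => by rw [hq k (Finset.ne_of_mem_erase hk), hG]), mul_one]

lemma sum_coeff_mul_prod_erase_eq_of_forall_ne_ne {F G : PowerSeries R}
    (hF : PowerSeries.coeff 0 F = 0) (hG : PowerSeries.coeff 0 G = 1) (hij : i ≠ j)
    (hq : ∀ k, k ≠ i → k ≠ j → q k = 0) :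
    ∑ k, PowerSeries.coeff (q k) F * ∏ k' ∈ Finset.univ.erase k, PowerSeries.coeff (q k') G =
      PowerSeries.coeff (q i) F * PowerSeries.coeff (q j) G +
        PowerSeries.coeff (q j) F * PowerSeries.coeff (q i) G := by
  have herase {a b : ι} (hab : a ≠ b) (hq' : ∀ k, k ≠ a → k ≠ b → q k = 0) :
      ∏ k' ∈ Finset.univ.erase a, PowerSeries.coeff (q k') G = PowerSeries.coeff (q b) G :=
    Finset.prod_eq_single_of_mem b (by simp [hab.symm]) fun k hk hkb => by
      rw [hq' k (Finset.ne_of_mem_erase hk) hkb, hG]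
  rw [Finset.sum_eq_add i j hij (fun k _ hk => by rw [hq k hk.1 hk.2, hF, zero_mul]) (by simp)
    (by simp), herase hij hq, herase hij.symm fun k hk hk' => hq k hk' hk]

lemma exists_odd_or_eq_zero_or_single_or_pair (q : ι → ℕ) (hq : ∑ k, q k ≤ 4) :
    (∃ k, q k = 1 ∨ q k = 3) ∨ (∀ k, q k = 0) ∨
      (∃ i, (q i = 2 ∨ q i = 4) ∧ ∀ k, k ≠ i → q k = 0) ∨
      ∃ i j, i ≠ j ∧ q i = 2 ∧ q j = 2 ∧ ∀ k, k ≠ i → k ≠ j → q k = 0 := by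
  by_cases hodd : ∃ k, q k = 1 ∨ q k = 3
  · exact Or.inl hodd
  push Not at hodd
  by_cases hzero : ∀ k, q k = 0
  · exact Or.inr (Or.inl hzero)
  push Not at hzero
  obtain ⟨i, hi⟩ := hzero
  have hsplit := Finset.add_sum_erase Finset.univ q (Finset.mem_univ i)
  have := hodd i
  by_cases hrest : ∀ k ∈ Finset.univ.erase i, q k = 0
  · exact Or.inr (Or.inr (Or.inl ⟨i, by omega, fun k hk => hrest k (by simp [hk])⟩))
  push Not at hrest
  obtain ⟨j, hj, hqj⟩ := hrest
  have hsplit' := Finset.add_sum_erase (Finset.univ.erase i) q hj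
  have := hodd j
  have hzero' : ∀ k ∈ (Finset.univ.erase i).erase j, q k = 0 :=
    Finset.sum_eq_zero_iff.mp (by omega)
  exact Or.inr (Or.inr (Or.inr ⟨i, j, (Finset.ne_of_mem_erase hj).symm, by omega, by omega,
    fun k hki hkj => hzero' k (by simp [hki, hkj])⟩))

lemma sum_prod_coeff_mul_mulSingle (F H : PowerSeries ℚ) (q : ι → ℕ) :
    ∑ k₀, ∏ k, PowerSeries.coeff (q k) (F * (Pi.mulSingle k₀ H : ι → PowerSeries ℚ) k) =
      2 * Fintype.card ι * ∏ k, PowerSeries.coeff (q k) F +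
        ∑ k₀, PowerSeries.coeff (q k₀) (F * (H - 2)) *
          ∏ k ∈ Finset.univ.erase k₀, PowerSeries.coeff (q k) F := by
  have hterm (k₀ : ι) :
      ∏ k, PowerSeries.coeff (q k) (F * (Pi.mulSingle k₀ H : ι → PowerSeries ℚ) k) =
        2 * ∏ k, PowerSeries.coeff (q k) F + PowerSeries.coeff (q k₀) (F * (H - 2)) *
          ∏ k ∈ Finset.univ.erase k₀, PowerSeries.coeff (q k) F := by
    have hH : F * H = PowerSeries.C 2 * F + F * (H - 2) := by rw [map_ofNat]; ring
    rw [← Finset.mul_prod_erase _ _ (Finset.mem_univ k₀),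
      ← Finset.mul_prod_erase _ _ (Finset.mem_univ k₀), Pi.mulSingle_eq_same, hH, map_add,
      PowerSeries.coeff_C_mul, Finset.prod_congr rfl fun k hk => by
        rw [Pi.mulSingle_eq_of_ne (Finset.ne_of_mem_erase hk), mul_one]]
    ring
  rw [Finset.sum_congr rfl fun k₀ _ => hterm k₀, Finset.sum_add_distrib, Finset.sum_const,
    Finset.card_univ, nsmul_eq_mul]
  ring

end RootPatterns

section ChernRoots

open PowerSeries (ahat coshHalf twoCosh expSq)

variable {l : ℕ}

/-- `∏ⱼ a(xⱼ) · ∏ₖ bₖ(yₖ) · c(u)`, where `xⱼ = X (inl (inl j))`, `yₖ = X (inl (inr k))` and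
`u = X (inr ())`. -/
noncomputable def chernProd (a : PowerSeries ℚ) (b : Fin l → PowerSeries ℚ) (c : PowerSeries ℚ) :
    MvPowerSeries ((Fin 4 ⊕ Fin l) ⊕ Unit) ℚ :=
  ∏ v, ofVar v (Sum.elim (Sum.elim (fun _ => a) b) (fun _ => c) v)

lemma chernProd_eq (a : PowerSeries ℚ) (b : Fin l → PowerSeries ℚ) (c : PowerSeries ℚ) :
    chernProd a b c = (∏ j, ofVar (Sum.inl (Sum.inl j)) a) *
      (∏ k, ofVar (Sum.inl (Sum.inr k)) (b k)) * ofVar (Sum.inr ()) c := by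
  simp [chernProd, Fintype.prod_sum_type]

lemma chernProd_one : chernProd (l := l) 1 1 1 = 1 := by
  simp [chernProd_eq]

lemma chernProd_mul (a a' : PowerSeries ℚ) (b b' : Fin l → PowerSeries ℚ) (c c' : PowerSeries ℚ) :
    chernProd a b c * chernProd a' b' c' = chernProd (a * a') (b * b') (c * c') := by
  simp only [chernProd_eq, Pi.mul_apply, map_mul, Finset.prod_mul_distrib]
  ring

lemma coeff_chernProd (a : PowerSeries ℚ) (b : Fin l → PowerSeries ℚ) (c : PowerSeries ℚ)
    (m : (Fin 4 ⊕ Fin l) ⊕ Unit →₀ ℕ) :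
    coeff m (chernProd a b c) = (∏ j, PowerSeries.coeff (m (Sum.inl (Sum.inl j))) a) *
      (∏ k, PowerSeries.coeff (m (Sum.inl (Sum.inr k))) (b k)) *
        PowerSeries.coeff (m (Sum.inr ())) c := by
  rw [chernProd, coeff_prod_ofVar]
  simp [Fintype.prod_sum_type]

lemma prod_eq_chernProd_ahat {A : Fin 4 → MvPowerSeries ((Fin 4 ⊕ Fin l) ⊕ Unit) ℚ}
    (hA : ∀ j, A j * (mexp ((2 : ℚ)⁻¹ • X (Sum.inl (Sum.inl j))) -
        mexp (-((2 : ℚ)⁻¹ • X (Sum.inl (Sum.inl j))))) = X (Sum.inl (Sum.inl j))) :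
    ∏ j, A j = chernProd ahat 1 1 := by
  simp [chernProd_eq, eq_ofVar_ahat (hA _)]

lemma prod_mexp_add_mexp_neg_eq_chernProd :
    ∏ k : Fin l, (mexp ((2 : ℚ)⁻¹ • X (Sum.inl (Sum.inr k))) +
      mexp (-((2 : ℚ)⁻¹ • X (Sum.inl (Sum.inr k))))) = chernProd 1 (fun _ => twoCosh 2⁻¹) 1 := by
  simp [chernProd_eq, mexp_add_mexp_neg]

lemma sum_mexp_add_mexp_neg_eq_chernProd :
    ∑ k : Fin l, (mexp (X (Sum.inl (Sum.inr k))) + mexp (-X (Sum.inl (Sum.inr k)))) =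
      ∑ k, chernProd 1 (Pi.mulSingle k (twoCosh 1)) 1 := by
  refine Finset.sum_congr rfl fun k _ => ?_
  rw [← one_smul ℚ (X _), mexp_add_mexp_neg, chernProd_eq,
    Finset.prod_eq_single k (fun k' _ hk' => by simp [hk']) (by simp)]
  simp

lemma ofVar_inr_eq_chernProd (f : PowerSeries ℚ) :
    ofVar (Sum.inr () : (Fin 4 ⊕ Fin l) ⊕ Unit) f = chernProd 1 1 f := by
  simp [chernProd_eq]

lemma mexp_add_mexp_neg_sub_two_eq_chernProd :
    mexp (X (Sum.inr ()) : MvPowerSeries ((Fin 4 ⊕ Fin l) ⊕ Unit) ℚ) + mexp (-X (Sum.inr ())) - 2 =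
      chernProd 1 1 (twoCosh 1 - 2) := by
  rw [← one_smul ℚ (X _), mexp_add_mexp_neg, ← ofVar_inr_eq_chernProd, map_sub, map_ofNat]

lemma mexp_smul_sum_sq_sub_sum_sq_eq_chernProd :
    mexp ((24 : ℚ)⁻¹ •
        ((∑ j, X (Sum.inl (Sum.inl j)) ^ 2) - ∑ k : Fin l, X (Sum.inl (Sum.inr k)) ^ 2)) =
      chernProd (expSq 24⁻¹) (fun _ => expSq (-24⁻¹)) 1 := by
  have hc (c : ℚ) (v : (Fin 4 ⊕ Fin l) ⊕ Unit) :
      constantCoeff (c • (X v : MvPowerSeries _ ℚ) ^ 2) = 0 := by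
    simp
  rw [smul_sub, sub_eq_add_neg, Finset.smul_sum, Finset.smul_sum, ← Finset.sum_neg_distrib,
    mexp_add (by simp [hc]) (by simp [hc]), mexp_sum _ _ (fun _ _ => hc _ _),
    mexp_sum _ _ (fun _ _ => by rw [map_neg, hc, neg_zero])]
  simp only [← neg_smul, mexp_smul_X_pow _ _ two_ne_zero, chernProd_eq, map_one, mul_one]
  rfl

/-- The series of the theorem, each factor written in terms of the Chern roots. -/
noncomputable def anomalySeries (l : ℕ) : MvPowerSeries ((Fin 4 ⊕ Fin l) ⊕ Unit) ℚ :=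
  chernProd (expSq 24⁻¹) (fun _ => expSq (-24⁻¹)) 1 *
    (chernProd ahat 1 1 * chernProd 1 (fun _ => twoCosh 2⁻¹) 1 * chernProd 1 1 coshHalf⁻¹ ^ 2 -
      chernProd ahat 1 1 * chernProd 1 1 coshHalf *
        (-((2 : ℚ) ^ ((l : ℤ) - 4) • ∑ k, chernProd 1 (Pi.mulSingle k (twoCosh 1)) 1) +
          C ((2 : ℚ) ^ ((l : ℤ) - 3) * ((l : ℚ) + 8)) +
          (3 * (2 : ℚ) ^ ((l : ℤ) - 4)) • chernProd 1 1 (twoCosh 1 - 2)))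

/-- The factor of the coefficient of `x^n y^q u^ν` in `anomalySeries l` that depends on `q` and
`ν` (see `coeff_anomalySeries`), simplified by `2 cosh (y/2) = 2 • coshHalf` and by splitting off
the constant term `2` of `e^y + e^{-y}`. -/
noncomputable def anomalyCoeff (l : ℕ) (q : Fin l → ℕ) (ν : ℕ) : ℚ :=
  2 ^ l * (∏ k, PowerSeries.coeff (q k) (expSq (-24⁻¹) * coshHalf)) *
      PowerSeries.coeff ν (coshHalf⁻¹ ^ 2) -
    PowerSeries.coeff ν coshHalf *
      (-(2 ^ l / 16 * (2 * l * ∏ k, PowerSeries.coeff (q k) (expSq (-24⁻¹)) +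
          ∑ k₀, PowerSeries.coeff (q k₀) (expSq (-24⁻¹) * (twoCosh 1 - 2)) *
            ∏ k ∈ Finset.univ.erase k₀, PowerSeries.coeff (q k) (expSq (-24⁻¹)))) +
        2 ^ l / 8 * (l + 8) * ∏ k, PowerSeries.coeff (q k) (expSq (-24⁻¹))) -
    3 * (2 ^ l / 16) * (∏ k, PowerSeries.coeff (q k) (expSq (-24⁻¹))) *
      PowerSeries.coeff ν (coshHalf * (twoCosh 1 - 2))

lemma coeff_anomalySeries (m : (Fin 4 ⊕ Fin l) ⊕ Unit →₀ ℕ) :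
    coeff m (anomalySeries l) =
      (∏ j, PowerSeries.coeff (m (Sum.inl (Sum.inl j))) (expSq 24⁻¹ * ahat)) *
        anomalyCoeff l (fun k => m (Sum.inl (Sum.inr k))) (m (Sum.inr ())) := by
  have hβ : (2 : ℚ) ^ ((l : ℤ) - 4) = 2 ^ l / 16 := by
    rw [zpow_sub₀ two_ne_zero, zpow_natCast]
    norm_num
  have hγ : (2 : ℚ) ^ ((l : ℤ) - 3) = 2 ^ l / 8 := by
    rw [zpow_sub₀ two_ne_zero, zpow_natCast]
    norm_num
  rw [anomalySeries, ← mul_one (C _), ← smul_eq_C_mul, ← chernProd_one]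
  simp only [mul_sub, mul_add, mul_neg, Finset.mul_sum, mul_smul_comm, ← mul_assoc, sq,
    chernProd_mul, map_sub, map_add, map_neg, map_sum, map_smul, coeff_chernProd, smul_eq_mul,
    mul_one, one_mul, Pi.mul_apply]
  simp only [← Finset.sum_mul, ← Finset.mul_sum, prod_coeff_mul_twoCosh_half,
    sum_prod_coeff_mul_mulSingle, hβ, hγ, Fintype.card_fin, anomalyCoeff, mul_sub, map_sub, sq]
  ring

end ChernRoots

section Vanishing

open PowerSeries (ahat coshHalf twoCosh expSq coeff_eq_of_trunc_eq)

variable {l : ℕ}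

lemma anomalyCoeff_eq_zero_of_odd (q : Fin l → ℕ) (ν : ℕ) {k : Fin l} (hk : q k = 1 ∨ q k = 3) :
    anomalyCoeff l q ν = 0 := by
  have hG := coeff_eq_of_trunc_eq (PowerSeries.trunc_expSq (-24⁻¹))
  have hG' := coeff_eq_of_trunc_eq PowerSeries.trunc_expSq_mul_coshHalf
  have hGT := coeff_eq_of_trunc_eq PowerSeries.trunc_expSq_mul_twoCosh_one_sub_two
  have hGk : PowerSeries.coeff (q k) (expSq (-24⁻¹)) = 0 := by
    rcases hk with hk | hk <;> simp [hk, hG]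
  have hG'k : PowerSeries.coeff (q k) (expSq (-24⁻¹) * coshHalf) = 0 := by
    rcases hk with hk | hk <;> simp [hk, hG']
  have hGTk : PowerSeries.coeff (q k) (expSq (-24⁻¹) * (twoCosh 1 - 2)) = 0 := by
    rcases hk with hk | hk <;> simp [hk, hGT]
  have hprod : ∏ k', PowerSeries.coeff (q k') (expSq (-24⁻¹)) = 0 :=
    Finset.prod_eq_zero (Finset.mem_univ k) hGk
  have hprod' : ∏ k', PowerSeries.coeff (q k') (expSq (-24⁻¹) * coshHalf) = 0 :=
    Finset.prod_eq_zero (Finset.mem_univ k) hG'k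
  rw [anomalyCoeff, sum_coeff_mul_prod_erase_eq_zero hGTk hGk, hprod, hprod']
  ring

lemma anomalyCoeff_eq_zero (q : Fin l → ℕ) (ν : ℕ) (h : ∑ k, q k + ν = 0 ∨ ∑ k, q k + ν = 4) :
    anomalyCoeff l q ν = 0 := by
  have hG := coeff_eq_of_trunc_eq (PowerSeries.trunc_expSq (-24⁻¹))
  have hG' := coeff_eq_of_trunc_eq PowerSeries.trunc_expSq_mul_coshHalf
  have hGT := coeff_eq_of_trunc_eq PowerSeries.trunc_expSq_mul_twoCosh_one_sub_two
  have hR := coeff_eq_of_trunc_eq PowerSeries.trunc_inv_coshHalf_sq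
  have hS := coeff_eq_of_trunc_eq PowerSeries.trunc_coshHalf
  have hT := coeff_eq_of_trunc_eq PowerSeries.trunc_coshHalf_mul_twoCosh_one_sub_two
  have hG₀ : PowerSeries.coeff 0 (expSq (-24⁻¹)) = 1 := by rw [hG 0 (by norm_num)]; simp
  have hG'₀ : PowerSeries.coeff 0 (expSq (-24⁻¹) * coshHalf) = 1 := by
    rw [hG' 0 (by norm_num)]; simp
  have hGT₀ : PowerSeries.coeff 0 (expSq (-24⁻¹) * (twoCosh 1 - 2)) = 0 := by
    rw [hGT 0 (by norm_num)]; simp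
  obtain ⟨k, hk⟩ | hq | ⟨i, hi, hq⟩ | ⟨i, j, hij, hqi, hqj, hq⟩ :=
    exists_odd_or_eq_zero_or_single_or_pair q (by omega)
  · exact anomalyCoeff_eq_zero_of_odd q ν hk
  · obtain rfl | rfl : ν = 0 ∨ ν = 4 := by simpa only [hq, Finset.sum_const_zero, zero_add] using h
    all_goals
      simp only [anomalyCoeff, hq, hG, hG', hGT, hR, hS, hT, Polynomial.coeff_evenQuartic,
        Nat.reduceLT, Nat.reduceEqDiff, OfNat.ofNat_ne_zero, reduceIte, zero_mul,
        Finset.prod_const_one, Finset.sum_const_zero]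
      ring
  · have hsum : ∑ k, q k = q i := Finset.sum_eq_single i (fun k _ hk => hq k hk) (by simp)
    rw [anomalyCoeff, prod_coeff_eq_of_forall_ne hG'₀ hq, prod_coeff_eq_of_forall_ne hG₀ hq,
      sum_coeff_mul_prod_erase_eq_of_forall_ne hGT₀ hG₀ hq]
    rcases hi with hi | hi <;> obtain rfl : ν = 4 - q i := by omega
    all_goals
      simp only [hi, Nat.reduceSub, hG, hG', hGT, hR, hS, hT, Polynomial.coeff_evenQuartic,
        Nat.reduceLT, Nat.reduceEqDiff, OfNat.ofNat_ne_zero, reduceIte]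
      ring
  · have hsum : ∑ k, q k = q i + q j :=
      Finset.sum_eq_add i j hij (fun k _ hk => hq k hk.1 hk.2) (by simp) (by simp)
    obtain rfl : ν = 0 := by omega
    rw [anomalyCoeff, prod_coeff_eq_of_forall_ne_ne hG'₀ hij hq,
      prod_coeff_eq_of_forall_ne_ne hG₀ hij hq,
      sum_coeff_mul_prod_erase_eq_of_forall_ne_ne hGT₀ hG₀ hij hq]
    simp only [hqi, hqj, hG, hG', hGT, hR, hS, hT, Polynomial.coeff_evenQuartic, Nat.reduceLT,
      Nat.reduceEqDiff, OfNat.ofNat_ne_zero, reduceIte]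
    ring

lemma prod_coeff_expSq_mul_ahat_eq_zero (n : Fin 4 → ℕ) (h₀ : ∑ j, n j ≠ 0) (h₄ : ∑ j, n j < 4) :
    ∏ j, PowerSeries.coeff (n j) (expSq 24⁻¹ * ahat) = 0 := by
  obtain ⟨j, hj⟩ : ∃ j, n j ≠ 0 := by
    by_contra! h
    simp [h] at h₀
  have hle : n j ≤ ∑ j, n j := Finset.single_le_sum (fun _ _ => Nat.zero_le _) (Finset.mem_univ j)
  refine Finset.prod_eq_zero (Finset.mem_univ j) ?_
  rw [coeff_eq_of_trunc_eq PowerSeries.trunc_expSq_mul_ahat _ (by omega)]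
  simp [hj, show n j ≠ 4 by omega]

lemma prod_coeff_expSq_mul_ahat_mul_anomalyCoeff_eq_zero (n : Fin 4 → ℕ) (q : Fin l → ℕ) (ν : ℕ)
    (h : ∑ j, n j + (∑ k, q k + ν) = 4) :
    (∏ j, PowerSeries.coeff (n j) (expSq 24⁻¹ * ahat)) * anomalyCoeff l q ν = 0 := by
  by_cases hyu : ∑ k, q k + ν = 0 ∨ ∑ k, q k + ν = 4
  · rw [anomalyCoeff_eq_zero q ν hyu, mul_zero]
  · rw [prod_coeff_expSq_mul_ahat_eq_zero n (by omega) (by omega), zero_mul]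

end Vanishing

/-- Corollary 1.5(2), twisted case (eq. (1.39)/(1.45)): in degree 4 (form degree 8),
`{e^{(1/24)(p₁(TX)-p₁(W))}[Â(TX) det^{1/2}(2cosh((√-1/4π)R^W))/cosh²(c/2)
   - Â(TX) cosh(c/2)(-2^{l-4} ch(W_ℂ) + 2^{l-3}(l+8) + 3·2^{l-4}(e^c + e^{-c} - 2))]}^{(8)} = 0`,
at the level of Chern roots `±xⱼ` for `T_ℂX` (`dim X = 8`), `±yₖ` for `W_ℂ` (`rk W = 2l`),
with `u` the Euler form of `ξ`. `A j` is the Â-series of `xⱼ`, and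
`(mcosh ((2:ℚ)⁻¹ • u))⁻¹` is the multiplicative inverse of the unit power series `cosh(u/2)`. -/
theorem anomaly_dim8_twisted (l : ℕ)
    (A : Fin 4 → MvPowerSeries ((Fin 4 ⊕ Fin l) ⊕ Unit) ℚ)
    (hA : ∀ j, A j * (mexp ((2 : ℚ)⁻¹ • X (Sum.inl (Sum.inl j))) -
        mexp (-((2 : ℚ)⁻¹ • X (Sum.inl (Sum.inl j))))) = X (Sum.inl (Sum.inl j)))
    (m : ((Fin 4 ⊕ Fin l) ⊕ Unit) →₀ ℕ) (hm : (m.sum fun _ e => e) = 4) :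
    MvPowerSeries.coeff (R := ℚ) m
      (mexp ((24 : ℚ)⁻¹ •
          ((∑ j, X (Sum.inl (Sum.inl j)) ^ 2) - ∑ k, X (Sum.inl (Sum.inr k)) ^ 2)) *
        ((∏ j, A j) *
            (∏ k, (mexp ((2 : ℚ)⁻¹ • X (Sum.inl (Sum.inr k))) +
              mexp (-((2 : ℚ)⁻¹ • X (Sum.inl (Sum.inr k)))))) *
            ((mcosh ((2 : ℚ)⁻¹ • X (Sum.inr ())))⁻¹) ^ 2
          - (∏ j, A j) * mcosh ((2 : ℚ)⁻¹ • X (Sum.inr ())) *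
            (-((2 : ℚ) ^ ((l : ℤ) - 4) •
                (∑ k, (mexp (X (Sum.inl (Sum.inr k))) + mexp (-X (Sum.inl (Sum.inr k))))))
              + MvPowerSeries.C (σ := _) (R := ℚ) ((2 : ℚ) ^ ((l : ℤ) - 3) * ((l : ℚ) + 8))
              + (3 * (2 : ℚ) ^ ((l : ℤ) - 4)) •
                (mexp (X (Sum.inr ())) + mexp (-X (Sum.inr ())) - 2))))
    = 0 := by
  rw [prod_eq_chernProd_ahat hA, prod_mexp_add_mexp_neg_eq_chernProd,
    mexp_smul_sum_sq_sub_sum_sq_eq_chernProd, sum_mexp_add_mexp_neg_eq_chernProd,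
    mexp_add_mexp_neg_sub_two_eq_chernProd, mcosh_smul_X_half,
    ofVar_inv _ (by simp [PowerSeries.constantCoeff_coshHalf]), ofVar_inr_eq_chernProd,
    ofVar_inr_eq_chernProd]
  change coeff m (anomalySeries l) = 0
  rw [coeff_anomalySeries]
  apply prod_coeff_expSq_mul_ahat_mul_anomalyCoeff_eq_zero
  rw [Finsupp.sum_fintype _ _ (fun _ => rfl), Fintype.sum_sum_type, Fintype.sum_sum_type] at hm
  simpa [add_assoc] using hm
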